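/- arXiv:2605.22724 — 2 statements merged into one kernel-verified Lean document; each statement's English description precedes it below -/
import Mathlib

section
/- Let d ≥ 1, η > 1 + 1/d, and let U = U(d, [0,2π]^d, L, β) be the class of L-Lipschitz functions on [0,2π]^d bounded by β, viewed inside L^r([0,2π]^d) for some r ≥ 1. Then there exists A > 0 and a sequence of unit-norm, linearly independent elements e_j ∈ L^r([0,2π]^d) (normalized sine functions) with a uniformly bounded biorthogonal family e*_j in the dual, such that every function of the form u = A Σ_{j=1}^∞ j^{−η} y_j e_j with coefficients y_j ∈ [0,1] belongs to U, i.e., u is L-Lipschitz and ‖u‖_∞ ≤ β. -/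
open Real MeasureTheory

/-- The cube `[0, 2π]^d` in Euclidean space. -/
def sineCubeE (d : ℕ) : Set (EuclideanSpace ℝ (Fin d)) :=
  {x | ∀ i, x i ∈ Set.Icc (0 : ℝ) (2 * π)}

namespace SineCubeAux

/-- Bit-interleaving: `tau d j i` has bits `i, i+d, i+2d, ...` of `j`. -/
def tau (d j i : ℕ) : ℕ :=
  if h : j = 0 ∨ d = 0 then 0
  else (if j.testBit i then 1 else 0) + 2 * tau d (j / 2 ^ d) i
  termination_by j
  decreasing_by
    exact Nat.div_lt_self (Nat.pos_of_ne_zero (not_or.1 h).1)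
      (Nat.one_lt_two_pow (not_or.1 h).2)

lemma tau_zero (d i : ℕ) : tau d 0 i = 0 := by rw [tau]; simp

lemma testBit_div_pow (n d q : ℕ) : (n / 2 ^ d).testBit q = n.testBit (q + d) := by
  simp [Nat.testBit_eq_decide_div_mod_eq, Nat.div_div_eq_div_mul, ← pow_add, add_comm]

lemma tau_testBit (d : ℕ) (hd : d ≠ 0) (j i : ℕ) :
    ∀ q, (tau d j i).testBit q = j.testBit (q * d + i) := by
  induction j using Nat.strong_induction_on with
  | _ j IH =>
    intro q
    rcases eq_or_ne j 0 with rfl | hj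
    · simp [tau_zero]
    rw [tau]; simp only [hj, hd, or_self, dif_neg, not_false_iff]
    have hlt : j / 2 ^ d < j := Nat.div_lt_self (Nat.pos_of_ne_zero hj) (Nat.one_lt_two_pow hd)
    cases q with
    | zero =>
      rcases Bool.eq_false_or_eq_true (j.testBit i) with h | h <;>
        simp [h, Nat.testBit_zero, Nat.add_mul_mod_self_left]
    | succ q =>
      have : ((if j.testBit i then 1 else 0) + 2 * tau d (j / 2 ^ d) i) / 2
          = tau d (j / 2 ^ d) i := by
        rcases Bool.eq_false_or_eq_true (j.testBit i) with h | h <;> simp [h]; omega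
      rw [Nat.testBit_succ, this, IH _ hlt, testBit_div_pow]
      congr 1; ring

lemma tau_injective (d : ℕ) (hd : d ≠ 0) {j j' : ℕ}
    (h : ∀ i, i < d → tau d j i = tau d j' i) : j = j' := by
  apply Nat.eq_of_testBit_eq
  intro m
  have h1 : m = m / d * d + m % d := (Nat.div_add_mod' m d).symm
  rw [h1, ← tau_testBit d hd j _ (m / d), ← tau_testBit d hd j' _ (m / d),
    h _ (Nat.mod_lt _ (Nat.pos_of_ne_zero hd))]

lemma tau_lt (d : ℕ) (i : ℕ) : ∀ q j, j < 2 ^ (d * q) → tau d j i < 2 ^ q := by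
  intro q
  induction q with
  | zero =>
    intro j hj
    simp only [Nat.mul_zero, pow_zero, Nat.lt_one_iff] at hj
    simp [hj, tau_zero]
  | succ q IH =>
    intro j hj
    rcases eq_or_ne j 0 with rfl | hj0
    · simp only [tau_zero]; positivity
    rcases eq_or_ne d 0 with rfl | hd0
    · simp at hj; omega
    rw [tau]; simp only [hj0, hd0, or_self, dif_neg, not_false_iff]
    have : j / 2 ^ d < 2 ^ (d * q) := by
      rw [Nat.div_lt_iff_lt_mul (Nat.pos_of_ne_zero (by positivity))]
      calc j < 2 ^ (d * (q+1)) := hj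
        _ = 2 ^ (d * q) * 2 ^ d := by rw [← pow_add]; ring_nf
    have h2 := IH _ this
    have : (if j.testBit i then 1 else 0) ≤ 1 := by split <;> omega
    calc (if j.testBit i then 1 else 0) + 2 * tau d (j / 2^d) i
        ≤ 1 + 2 * tau d (j / 2^d) i := by omega
      _ < 2 ^ (q + 1) := by omega

lemma tau_real_bound (d : ℕ) (hd : 1 ≤ d) (j i : ℕ) :
    (tau d j i : ℝ) + 1 ≤ 2 * ((j : ℝ) + 1) ^ (1 / (d : ℝ)) := by
  have hd0 : (0:ℝ) < d := by exact_mod_cast hd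
  rcases eq_or_ne j 0 with rfl | hj
  · rw [tau_zero]
    push_cast
    rw [zero_add, Real.one_rpow]; norm_num
  set Lg := Nat.log 2 j with hLg
  set q := Lg / d + 1 with hq
  have hdq : Lg + 1 ≤ d * q := by
    have := Nat.lt_div_mul_add (a := Lg) (b := d) (Nat.pos_of_ne_zero (by omega))
    calc Lg + 1 ≤ Lg / d * d + d := this
      _ = d * q := by rw [hq]; ring
  have hjlt : j < 2 ^ (d * q) := by
    calc j < 2 ^ (Lg + 1) := Nat.lt_pow_succ_log_self (by norm_num) j
      _ ≤ 2 ^ (d * q) := Nat.pow_le_pow_right (by norm_num) hdq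
  have h1 : tau d j i + 1 ≤ 2 ^ q := tau_lt d i q j hjlt
  have h1R : (tau d j i : ℝ) + 1 ≤ (2:ℝ) ^ (q:ℕ) := by exact_mod_cast h1
  refine h1R.trans ?_
  have h2 : ((2:ℝ)) ^ (q:ℕ) = 2 * (2:ℝ) ^ ((Lg / d : ℕ) : ℝ) := by
    rw [hq, pow_succ, Real.rpow_natCast]; ring
  rw [h2]
  gcongr 2 * ?_
  have h3 : (2:ℝ) ^ ((Lg / d : ℕ) : ℝ) ≤ (2:ℝ) ^ ((Lg : ℝ) / (d : ℝ)) := by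
    apply Real.rpow_le_rpow_of_exponent_le one_le_two
    exact_mod_cast Nat.cast_div_le
  refine h3.trans ?_
  have h4 : (2:ℝ) ^ ((Lg : ℝ) / (d : ℝ)) = ((2:ℝ) ^ (Lg : ℝ)) ^ (1 / (d:ℝ)) := by
    rw [← Real.rpow_mul (by norm_num)]
    congr 1; field_simp
  rw [h4]
  apply Real.rpow_le_rpow (by positivity) _ (by positivity)
  rw [Real.rpow_natCast]
  have : (2:ℕ) ^ Lg ≤ j := Nat.pow_log_le_self 2 hj
  have : ((2:ℕ) ^ Lg : ℝ) ≤ (j:ℝ) := by exact_mod_cast this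
  push_cast at this ⊢
  linarith

/-! ### One-dimensional integrals -/

noncomputable def Fr (r : ℝ) : ℝ → ℝ := fun t => |Real.sin t| ^ r

lemma Fr_cont (r : ℝ) (hr : 1 ≤ r) : Continuous (Fr r) :=
  (continuous_abs.comp Real.continuous_sin).rpow_const (fun _ => Or.inr (by linarith))

lemma Fr_periodic (r : ℝ) : Function.Periodic (Fr r) (2 * π) := fun t => by
  simp [Fr, Real.sin_add_two_pi]

lemma Fr_nonneg (r : ℝ) (t : ℝ) : 0 ≤ Fr r t := Real.rpow_nonneg (abs_nonneg _) r

lemma setIcc_eq_interval (f : ℝ → ℝ) :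
    ∫ t in Set.Icc (0:ℝ) (2*π), f t = ∫ t in (0:ℝ)..(2*π), f t := by
  rw [intervalIntegral.integral_of_le (by positivity), MeasureTheory.integral_Icc_eq_integral_Ioc]

lemma integral_Fr_scale (r : ℝ) (hr : 1 ≤ r) (k : ℕ) (hk : 1 ≤ k) :
    ∫ t in (0:ℝ)..(2*π), Fr r ((k:ℝ) * t) = ∫ t in (0:ℝ)..(2*π), Fr r t := by
  have hk0 : (k:ℝ) ≠ 0 := by positivity
  have hint : ∀ t₁ t₂ : ℝ, IntervalIntegrable (Fr r) MeasureTheory.volume t₁ t₂ :=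
    fun t₁ t₂ => (Fr_cont r hr).intervalIntegrable t₁ t₂
  rw [intervalIntegral.integral_comp_mul_left (Fr r) hk0]
  have h1 : (k:ℝ) * (2*π) = 0 + (k:ℤ) • (2*π) := by
    rw [zsmul_eq_mul]; push_cast; ring
  rw [mul_zero, h1, (Fr_periodic r).intervalIntegral_add_zsmul_eq (k:ℤ) 0 hint]
  rw [zsmul_eq_mul, smul_eq_mul, zero_add]
  push_cast
  field_simp

lemma sin_int_mul_two_pi (n : ℤ) : Real.sin ((n:ℝ) * (2*π)) = 0 := by
  have : ((n:ℝ)) * (2*π) = ((2*n : ℤ) : ℝ) * π := by push_cast; ring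
  rw [this, Real.sin_int_mul_pi]

lemma integral_cos_freq (c : ℝ) (hc : c ≠ 0) :
    ∫ t in (0:ℝ)..(2*π), Real.cos (c*t) = Real.sin (c*(2*π)) / c := by
  rw [intervalIntegral.integral_comp_mul_left Real.cos hc, integral_cos]
  rw [mul_zero, Real.sin_zero, smul_eq_mul]
  rw [sub_zero]
  field_simp [mul_comm]

lemma integral_sin_mul_sin' (a b : ℕ) (ha : 1 ≤ a) (hb : 1 ≤ b) :
    ∫ t in (0:ℝ)..(2*π), Real.sin ((a:ℝ)*t) * Real.sin ((b:ℝ)*t)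
      = if a = b then π else 0 := by
  have key : ∀ t : ℝ, Real.sin ((a:ℝ)*t) * Real.sin ((b:ℝ)*t)
      = (Real.cos (((a:ℝ)-b)*t) - Real.cos (((a:ℝ)+b)*t))/2 := by
    intro t
    have h1 : ((((a:ℝ)-b)*t) + (((a:ℝ)+b)*t))/2 = (a:ℝ)*t := by ring
    have h2 : ((((a:ℝ)-b)*t) - (((a:ℝ)+b)*t))/2 = -((b:ℝ)*t) := by ring
    rw [Real.cos_sub_cos, h1, h2, Real.sin_neg]; ring
  rw [intervalIntegral.integral_congr (fun t _ => key t)]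
  have hcont1 : Continuous fun t : ℝ => Real.cos (((a:ℝ)-b)*t) := by continuity
  have hcont2 : Continuous fun t : ℝ => Real.cos (((a:ℝ)+b)*t) := by continuity
  have hsplit : (∫ t in (0:ℝ)..(2*π), (Real.cos (((a:ℝ)-b)*t) - Real.cos (((a:ℝ)+b)*t))/2)
      = ((∫ t in (0:ℝ)..(2*π), Real.cos (((a:ℝ)-b)*t))
        - ∫ t in (0:ℝ)..(2*π), Real.cos (((a:ℝ)+b)*t))/2 := by
    rw [← intervalIntegral.integral_sub (hcont1.intervalIntegrable _ _)
      (hcont2.intervalIntegrable _ _)]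
    simp_rw [← intervalIntegral.integral_div]
  rw [hsplit]
  have habne : ((a:ℝ)+b) ≠ 0 := by positivity
  have hInt2 : (∫ t in (0:ℝ)..(2*π), Real.cos (((a:ℝ)+b)*t)) = 0 := by
    rw [integral_cos_freq _ habne]
    have : ((a:ℝ)+b) = ((a+b : ℤ) : ℝ) := by push_cast; ring
    rw [this, sin_int_mul_two_pi]; simp
  by_cases hab : a = b
  · subst hab
    simp only [sub_self, zero_mul, Real.cos_zero, if_pos rfl]
    rw [hInt2]
    rw [intervalIntegral.integral_const]
    simp only [sub_zero, smul_eq_mul, mul_one, if_true]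
    ring
  · have habne' : ((a:ℝ)-b) ≠ 0 := by
      intro h
      apply hab
      have : (a:ℝ) = b := by linarith
      exact_mod_cast this
    have hInt1 : (∫ t in (0:ℝ)..(2*π), Real.cos (((a:ℝ)-b)*t)) = 0 := by
      rw [integral_cos_freq _ habne']
      have : ((a:ℝ)-b) = ((a-b : ℤ) : ℝ) := by push_cast; ring
      rw [this, sin_int_mul_two_pi]; simp
    rw [hInt1, hInt2, if_neg hab]
    ring

lemma Isin_pos (r : ℝ) (hr : 1 ≤ r) : 0 < ∫ t in (0:ℝ)..(2*π), Fr r t := by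
  have hint : ∀ t₁ t₂ : ℝ, IntervalIntegrable (Fr r) MeasureTheory.volume t₁ t₂ :=
    fun t₁ t₂ => (Fr_cont r hr).intervalIntegrable t₁ t₂
  have h1 : 0 < ∫ t in (0:ℝ)..π, Fr r t := by
    apply intervalIntegral.intervalIntegral_pos_of_pos_on (hint 0 π) _ Real.pi_pos
    intro x hx
    exact Real.rpow_pos_of_pos (abs_pos.2 (ne_of_gt (Real.sin_pos_of_pos_of_lt_pi hx.1 hx.2))) r
  have h2 : 0 ≤ ∫ t in π..(2*π), Fr r t :=
    intervalIntegral.integral_nonneg (by linarith [Real.pi_pos]) (fun u _ => Fr_nonneg r u)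
  have h3 := intervalIntegral.integral_add_adjacent_intervals (hint 0 π) (hint π (2*π))
  linarith [h3]

/-! ### The cube and Fubini -/

lemma cube_prod_integral (d : ℕ) (f : Fin d → ℝ → ℝ) :
    ∫ x in sineCubeE d, ∏ i, f i (x i) = ∏ i, ∫ t in Set.Icc (0:ℝ) (2*π), f i t := by
  set s : Set (Fin d → ℝ) := Set.pi Set.univ fun _ => Set.Icc (0:ℝ) (2*π) with hs
  have hpre : sineCubeE d = ((MeasurableEquiv.toLp 2 (Fin d → ℝ)).symm) ⁻¹' s := by
    ext x
    constructor
    · intro h i _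
      exact h i
    · intro h i
      exact h i (Set.mem_univ i)
  have hmeas : MeasurableSet s := MeasurableSet.univ_pi (fun _ => measurableSet_Icc)
  have h0 := (EuclideanSpace.volume_preserving_symm_measurableEquiv_toLp (Fin d)).setIntegral_preimage_emb
    ((MeasurableEquiv.toLp 2 (Fin d → ℝ)).symm).measurableEmbedding
    (fun y => ∏ i, f i (y i)) s
  rw [hpre]
  rw [show (∫ x in ((MeasurableEquiv.toLp 2 (Fin d → ℝ)).symm) ⁻¹' s, ∏ i, f i (x i))
      = ∫ x in ((MeasurableEquiv.toLp 2 (Fin d → ℝ)).symm) ⁻¹' s,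
          (fun y => ∏ i, f i (y i)) ((MeasurableEquiv.toLp 2 (Fin d → ℝ)).symm x) from rfl, h0]
  rw [← MeasureTheory.integral_indicator hmeas]
  have hind : (Set.indicator s fun y => ∏ i, f i (y i))
      = fun y => ∏ i, Set.indicator (Set.Icc (0:ℝ) (2*π)) (f i) (y i) := by
    funext y
    by_cases hy : y ∈ s
    · rw [Set.indicator_of_mem hy]
      exact Finset.prod_congr rfl fun i _ =>
        (Set.indicator_of_mem (hy i (Set.mem_univ i)) _).symm
    · rw [Set.indicator_of_notMem hy]
      rw [hs, Set.mem_pi] at hy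
      push_neg at hy
      obtain ⟨i, _, hiy⟩ := hy
      exact (Finset.prod_eq_zero (Finset.mem_univ i) (Set.indicator_of_notMem hiy _)).symm
  rw [hind, MeasureTheory.integral_fintype_prod_volume_eq_prod (ι := Fin d)
    (fun i t => Set.indicator (Set.Icc (0:ℝ) (2*π)) (f i) t)]
  exact Finset.prod_congr rfl fun i _ =>
    MeasureTheory.integral_indicator measurableSet_Icc

lemma cube_isCompact (d : ℕ) : IsCompact (sineCubeE d) := by
  set cle := PiLp.continuousLinearEquiv 2 ℝ (fun _ : Fin d => ℝ)
  have h : sineCubeE d = cle ⁻¹' (Set.pi Set.univ fun _ => Set.Icc (0:ℝ) (2*π)) := by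
    ext x
    constructor
    · intro hx i _; exact hx i
    · intro hx i; exact hx i (Set.mem_univ i)
  have h2 : (cle.symm : (Fin d → ℝ) → EuclideanSpace ℝ (Fin d)) ''
      (Set.pi Set.univ fun _ => Set.Icc (0:ℝ) (2*π))
      = cle ⁻¹' (Set.pi Set.univ fun _ => Set.Icc (0:ℝ) (2*π)) := by
    ext x
    constructor
    · rintro ⟨y, hy, rfl⟩
      intro i _
      exact hy i (Set.mem_univ i)
    · intro hx
      exact ⟨cle x, fun i _ => hx i (Set.mem_univ i), by simp⟩
  rw [h, ← h2]
  exact (isCompact_univ_pi (fun _ => isCompact_Icc)).image cle.symm.continuous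

/-! ### The basis functions -/

noncomputable def gfun (d j : ℕ) : EuclideanSpace ℝ (Fin d) → ℝ :=
  fun x => ∏ i : Fin d, Real.sin (((tau d j i + 1 : ℕ) : ℝ) * x i)

lemma coord_continuous (d : ℕ) (i : Fin d) :
    Continuous (fun x : EuclideanSpace ℝ (Fin d) => x i) :=
  (continuous_apply i).comp (PiLp.continuousLinearEquiv 2 ℝ (fun _ : Fin d => ℝ)).continuous

lemma gfun_continuous (d j : ℕ) : Continuous (gfun d j) :=
  continuous_finset_prod _ fun i _ =>
    Real.continuous_sin.comp (continuous_const.mul (coord_continuous d i))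

lemma gfun_abs_le (d j : ℕ) (x : EuclideanSpace ℝ (Fin d)) : |gfun d j x| ≤ 1 := by
  rw [gfun, Finset.abs_prod]
  exact Finset.prod_le_one (fun i _ => abs_nonneg _)
    (fun i _ => Real.abs_sin_le_one _)

lemma coord_dist (d : ℕ) (x z : EuclideanSpace ℝ (Fin d)) (i : Fin d) :
    |x i - z i| ≤ dist x z := by
  rw [EuclideanSpace.dist_eq]
  calc |x i - z i| = Real.sqrt (dist (x i) (z i) ^ 2) := by
        rw [Real.dist_eq, Real.sqrt_sq_eq_abs, abs_abs]
    _ ≤ _ := by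
        apply Real.sqrt_le_sqrt
        exact Finset.single_le_sum (fun i _ => sq_nonneg (dist (x i) (z i)))
          (Finset.mem_univ i)

lemma abs_sin_sub_sin (a b : ℝ) : |Real.sin a - Real.sin b| ≤ |a - b| := by
  rw [Real.sin_sub_sin, abs_mul, abs_mul]
  have h1 : |Real.sin ((a-b)/2)| ≤ |(a-b)/2| := Real.abs_sin_le_abs
  have h2 : |Real.cos ((a+b)/2)| ≤ 1 := Real.abs_cos_le_one _
  have h3 : |(2:ℝ)| = 2 := by norm_num
  calc |(2:ℝ)| * |Real.sin ((a-b)/2)| * |Real.cos ((a+b)/2)|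
      ≤ |(2:ℝ)| * |(a-b)/2| * 1 :=
        mul_le_mul (mul_le_mul le_rfl h1 (abs_nonneg _) (abs_nonneg _)) h2
          (abs_nonneg _) (by positivity)
    _ = |a - b| := by
        rw [h3, mul_one, abs_div, h3]
        ring

lemma prod_sub_prod_abs_le {ι : Type*} (s : Finset ι) (F G : ι → ℝ)
    (hF : ∀ i, |F i| ≤ 1) (hG : ∀ i, |G i| ≤ 1) :
    |∏ i ∈ s, F i - ∏ i ∈ s, G i| ≤ ∑ i ∈ s, |F i - G i| := by
  classical
  induction s using Finset.induction_on with
  | empty => simp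
  | insert _ _ ha IH =>
    rename_i a s
    rw [Finset.prod_insert ha, Finset.prod_insert ha, Finset.sum_insert ha]
    have hGp : |∏ i ∈ s, G i| ≤ 1 := by
      rw [Finset.abs_prod]
      exact Finset.prod_le_one (fun i _ => abs_nonneg _) (fun i _ => hG i)
    calc |F a * ∏ i ∈ s, F i - G a * ∏ i ∈ s, G i|
        = |F a * (∏ i ∈ s, F i - ∏ i ∈ s, G i) + (F a - G a) * ∏ i ∈ s, G i| := by
          congr 1; ring
      _ ≤ |F a| * |∏ i ∈ s, F i - ∏ i ∈ s, G i| + |F a - G a| * |∏ i ∈ s, G i| := by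
          refine (abs_add_le _ _).trans ?_
          rw [abs_mul, abs_mul]
      _ ≤ 1 * (∑ i ∈ s, |F i - G i|) + |F a - G a| * 1 :=
          add_le_add (mul_le_mul (hF a) IH (abs_nonneg _) zero_le_one)
            (mul_le_mul_of_nonneg_left hGp (abs_nonneg _))
      _ = |F a - G a| + ∑ i ∈ s, |F i - G i| := by ring

lemma gfun_lip (d j : ℕ) (hd : 1 ≤ d) (x z : EuclideanSpace ℝ (Fin d)) :
    |gfun d j x - gfun d j z|
      ≤ (2 * d * ((j:ℝ)+1) ^ (1/(d:ℝ))) * dist x z := by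
  have h1 : |gfun d j x - gfun d j z|
      ≤ ∑ i : Fin d, |Real.sin (((tau d j i + 1 : ℕ) : ℝ) * x i)
        - Real.sin (((tau d j i + 1 : ℕ) : ℝ) * z i)| :=
    prod_sub_prod_abs_le _ _ _ (fun i => Real.abs_sin_le_one _)
      (fun i => Real.abs_sin_le_one _)
  refine h1.trans ?_
  have h2 : ∀ i : Fin d, |Real.sin (((tau d j i + 1 : ℕ) : ℝ) * x i)
        - Real.sin (((tau d j i + 1 : ℕ) : ℝ) * z i)|
      ≤ (2 * ((j:ℝ)+1) ^ (1/(d:ℝ))) * dist x z := by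
    intro i
    refine (abs_sin_sub_sin _ _).trans ?_
    rw [← mul_sub, abs_mul, abs_of_nonneg (by positivity : (0:ℝ) ≤ ((tau d j i + 1 : ℕ) : ℝ))]
    have hb := tau_real_bound d hd j i
    push_cast at hb ⊢
    have := coord_dist d x z i
    have hdist : (0:ℝ) ≤ dist x z := dist_nonneg
    nlinarith [abs_nonneg (x i - z i)]
  calc ∑ i : Fin d, |Real.sin (((tau d j i + 1 : ℕ) : ℝ) * x i)
        - Real.sin (((tau d j i + 1 : ℕ) : ℝ) * z i)|
      ≤ ∑ _i : Fin d, (2 * ((j:ℝ)+1) ^ (1/(d:ℝ))) * dist x z :=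
        Finset.sum_le_sum (fun i _ => h2 i)
    _ = (2 * d * ((j:ℝ)+1) ^ (1/(d:ℝ))) * dist x z := by
        rw [Finset.sum_const, Finset.card_univ, Fintype.card_fin, nsmul_eq_mul]
        ring

lemma gfun_norm_integral (d : ℕ) (r : ℝ) (hr : 1 ≤ r) (j : ℕ) :
    ∫ x in sineCubeE d, |gfun d j x| ^ r = (∫ t in (0:ℝ)..(2*π), Fr r t) ^ d := by
  have h1 : ∀ x : EuclideanSpace ℝ (Fin d), |gfun d j x| ^ r
      = ∏ i : Fin d, Fr r (((tau d j i + 1 : ℕ) : ℝ) * x i) := by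
    intro x
    rw [gfun, Finset.abs_prod, ← Real.finset_prod_rpow _ _ (fun i _ => abs_nonneg _) r]
    rfl
  simp only [h1]
  rw [cube_prod_integral d (fun i t => Fr r (((tau d j i + 1 : ℕ) : ℝ) * t))]
  have h2 : ∀ i : Fin d, (∫ t in Set.Icc (0:ℝ) (2*π), Fr r (((tau d j i + 1 : ℕ) : ℝ) * t))
      = ∫ t in (0:ℝ)..(2*π), Fr r t := by
    intro i
    rw [setIcc_eq_interval]
    exact integral_Fr_scale r hr (tau d j i + 1) (Nat.le_add_left 1 _)
  rw [Finset.prod_congr rfl (fun i _ => h2 i), Finset.prod_const, Finset.card_univ,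
    Fintype.card_fin]

lemma gfun_orth (d : ℕ) (hd : 1 ≤ d) (j k : ℕ) :
    ∫ x in sineCubeE d, gfun d j x * gfun d k x = if j = k then π ^ d else 0 := by
  have h1 : ∀ x : EuclideanSpace ℝ (Fin d), gfun d j x * gfun d k x
      = ∏ i : Fin d, (Real.sin (((tau d j i + 1 : ℕ) : ℝ) * x i)
          * Real.sin (((tau d k i + 1 : ℕ) : ℝ) * x i)) := by
    intro x
    rw [gfun, gfun, ← Finset.prod_mul_distrib]
  simp only [h1]
  rw [cube_prod_integral d (fun i t => Real.sin (((tau d j i + 1 : ℕ) : ℝ) * t)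
    * Real.sin (((tau d k i + 1 : ℕ) : ℝ) * t))]
  have heach : ∀ i : Fin d, (∫ t in Set.Icc (0:ℝ) (2*π),
        Real.sin (((tau d j i + 1 : ℕ) : ℝ) * t) * Real.sin (((tau d k i + 1 : ℕ) : ℝ) * t))
      = if tau d j i + 1 = tau d k i + 1 then π else 0 := by
    intro i
    rw [setIcc_eq_interval]
    exact integral_sin_mul_sin' (tau d j i + 1) (tau d k i + 1)
      (Nat.le_add_left 1 _) (Nat.le_add_left 1 _)
  rw [Finset.prod_congr rfl (fun i _ => heach i)]
  by_cases hjk : j = k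
  · subst hjk
    simp [Finset.prod_const]
  · have : ∃ i : Fin d, tau d j i ≠ tau d k i := by
      by_contra h
      push_neg at h
      exact hjk (tau_injective d (by omega) fun i hi => h ⟨i, hi⟩)
    obtain ⟨i0, hi0⟩ := this
    rw [Finset.prod_eq_zero (Finset.mem_univ i0) (by rw [if_neg (by omega)]), if_neg hjk]

/-! ### Hölder-type bound -/

lemma holder_bound {X : Type*} [MeasurableSpace X] (μ : Measure X) [IsFiniteMeasure μ]
    (r : ℝ) (hr : 1 ≤ r) (u : X → ℝ) (hu : MemLp u (ENNReal.ofReal r) μ) :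
    ∫ x, |u x| ∂μ ≤ (∫ x, |u x| ^ r ∂μ) ^ (1/r) * (μ Set.univ).toReal ^ (1 - 1/r) := by
  have hr0 : (0:ℝ) < r := lt_of_lt_of_le zero_lt_one hr
  set p := ENNReal.ofReal r with hp
  have hp0 : p ≠ 0 := by
    rw [hp]; simp [ENNReal.ofReal_eq_zero]; linarith
  have hptop : p ≠ ⊤ := ENNReal.ofReal_ne_top
  have hpt : p.toReal = r := ENNReal.toReal_ofReal hr0.le
  have h1p : (1:ENNReal) ≤ p := by
    rw [hp, ← ENNReal.ofReal_one]
    exact ENNReal.ofReal_le_ofReal hr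
  have hu1 : Integrable u μ := hu.integrable h1p
  have key := MeasureTheory.eLpNorm_le_eLpNorm_mul_rpow_measure_univ h1p hu.aestronglyMeasurable
  have hL : eLpNorm u 1 μ = ENNReal.ofReal (∫ x, |u x| ∂μ) := by
    rw [MeasureTheory.eLpNorm_one_eq_lintegral_enorm,
      ← MeasureTheory.ofReal_integral_norm_eq_lintegral_enorm hu1]
    simp [Real.norm_eq_abs]
  have hR : eLpNorm u p μ = ENNReal.ofReal ((∫ x, |u x| ^ r ∂μ) ^ (1/r)) := by
    rw [hu.eLpNorm_eq_integral_rpow_norm hp0 hptop, hpt]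
    simp [Real.norm_eq_abs, one_div]
  rw [hL, hR] at key
  have hexp : 1 / (1:ENNReal).toReal - 1 / p.toReal = 1 - 1/r := by
    rw [hpt]; simp
  rw [hexp] at key
  have hexp0 : (0:ℝ) ≤ 1 - 1/r := by
    have : 1/r ≤ 1 := by
      rw [div_le_one hr0]; linarith
    linarith
  have hfin : ENNReal.ofReal ((∫ x, |u x| ^ r ∂μ) ^ (1/r)) * μ Set.univ ^ (1 - 1/r) ≠ ⊤ := by
    apply ENNReal.mul_ne_top ENNReal.ofReal_ne_top
    exact ENNReal.rpow_ne_top_of_nonneg hexp0 (measure_ne_top μ _)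
  have := ENNReal.toReal_mono hfin key
  rw [ENNReal.toReal_ofReal (integral_nonneg (fun x => abs_nonneg _))] at this
  refine this.trans (le_of_eq ?_)
  rw [ENNReal.toReal_mul, ENNReal.toReal_ofReal (by positivity), ← ENNReal.toReal_rpow]

lemma summable_shift (s : ℝ) (hs : s < -1) : Summable (fun j : ℕ => ((j:ℝ)+1) ^ s) := by
  have h := Real.summable_nat_rpow.2 hs
  have h2 := h.comp_injective (add_left_injective 1)
  exact h2.congr (fun j => by simp)

def Vsub (d : ℕ) : Submodule ℝ (EuclideanSpace ℝ (Fin d) → ℝ) where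
  carrier := {u | IntegrableOn u (sineCubeE d) volume}
  add_mem' := fun hu hv => hu.add hv
  zero_mem' := integrable_zero _ _ _
  smul_mem' := fun a u hu => hu.smul a

lemma int_gu (d k : ℕ) {u : EuclideanSpace ℝ (Fin d) → ℝ}
    (hu : IntegrableOn u (sineCubeE d) volume) :
    IntegrableOn (fun x => gfun d k x * u x) (sineCubeE d) volume :=
  hu.bdd_mul (c := 1) (gfun_continuous d k).aestronglyMeasurable
    (ae_of_all _ fun x => by rw [Real.norm_eq_abs]; exact gfun_abs_le d k x)

noncomputable def phi (d k : ℕ) (c' : ℝ) : Vsub d →ₗ[ℝ] ℝ where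
  toFun := fun u => c' * ∫ x in sineCubeE d, gfun d k x * u.1 x
  map_add' := by
    intro u v
    have hu := int_gu d k u.2
    have hv := int_gu d k v.2
    have h1 : (fun x => gfun d k x * (↑(u + v) : EuclideanSpace ℝ (Fin d) → ℝ) x)
        = fun x => gfun d k x * u.1 x + gfun d k x * v.1 x := by
      funext x
      simp [mul_add]
    rw [h1, MeasureTheory.integral_add hu hv]
    ring
  map_smul' := by
    intro a u
    have h1 : (fun x => gfun d k x * (↑(a • u) : EuclideanSpace ℝ (Fin d) → ℝ) x)
        = fun x => a * (gfun d k x * u.1 x) := by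
      funext x
      simp [smul_eq_mul]
      ring
    simp only [RingHom.id_apply]
    rw [h1, MeasureTheory.integral_const_mul, smul_eq_mul]
    ring

lemma final_part (d : ℕ) (hd : 1 ≤ d) (η c A L β : ℝ)
    (hη2 : 1/(d:ℝ) - η < -1) (hη1 : -η < -1)
    (hc : 0 < c) (hA : 0 < A) (hL : 0 < L) (hβ : 0 < β)
    (hAL : A * (2*(d:ℝ)*(∑' j : ℕ, ((j:ℝ)+1) ^ (1/(d:ℝ) - η))) ≤ L * c)
    (hAβ : A * (∑' j : ℕ, ((j:ℝ)+1) ^ (-η)) ≤ β * c)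
    (y : ℕ → ℝ) (hy0 : ∀ j, 0 ≤ y j) (hy1 : ∀ j, y j ≤ 1) :
    LipschitzOnWith (Real.toNNReal L)
      (fun x => ∑' j : ℕ, A * ((j:ℝ)+1) ^ (-η) * y j * (gfun d j x / c)) (sineCubeE d) ∧
    ∀ x ∈ sineCubeE d, |∑' j : ℕ, A * ((j:ℝ)+1) ^ (-η) * y j * (gfun d j x / c)| ≤ β := by
  have hs1 : Summable (fun j : ℕ => ((j:ℝ)+1) ^ (-η)) := summable_shift _ hη1
  have hs2 : Summable (fun j : ℕ => ((j:ℝ)+1) ^ (1/(d:ℝ) - η)) := summable_shift _ hη2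
  have hν : ∀ j : ℕ, (0:ℝ) < ((j:ℝ)+1) ^ (-η) :=
    fun j => Real.rpow_pos_of_pos (by positivity) _
  have hcoef : ∀ j : ℕ, |A * ((j:ℝ)+1) ^ (-η) * y j| ≤ A * ((j:ℝ)+1) ^ (-η) := by
    intro j
    rw [abs_of_nonneg (mul_nonneg (mul_nonneg hA.le (hν j).le) (hy0 j))]
    calc A * ((j:ℝ)+1) ^ (-η) * y j ≤ A * ((j:ℝ)+1) ^ (-η) * 1 :=
        mul_le_mul_of_nonneg_left (hy1 j) (by positivity)
      _ = A * ((j:ℝ)+1) ^ (-η) := mul_one _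
  have hterm : ∀ (j : ℕ) (x : EuclideanSpace ℝ (Fin d)),
      ‖A * ((j:ℝ)+1) ^ (-η) * y j * (gfun d j x / c)‖ ≤ ((j:ℝ)+1) ^ (-η) * (A/c) := by
    intro j x
    rw [Real.norm_eq_abs, abs_mul]
    have h2 : |gfun d j x / c| ≤ 1/c := by
      rw [abs_div, abs_of_pos hc]
      gcongr
      exact gfun_abs_le d j x
    calc |A * ((j:ℝ)+1) ^ (-η) * y j| * |gfun d j x / c|
        ≤ (A * ((j:ℝ)+1) ^ (-η)) * (1/c) :=
          mul_le_mul (hcoef j) h2 (abs_nonneg _) (by positivity)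
      _ = ((j:ℝ)+1) ^ (-η) * (A/c) := by ring
  have hsum_t : ∀ x, Summable (fun j : ℕ => A * ((j:ℝ)+1) ^ (-η) * y j * (gfun d j x / c)) :=
    fun x => Summable.of_norm_bounded (hs1.mul_right (A/c)) (fun j => hterm j x)
  constructor
  · apply LipschitzOnWith.of_dist_le_mul
    intro x _ z _
    have hdiff : ∀ j : ℕ,
        ‖A * ((j:ℝ)+1) ^ (-η) * y j * (gfun d j x / c)
          - A * ((j:ℝ)+1) ^ (-η) * y j * (gfun d j z / c)‖
        ≤ ((j:ℝ)+1) ^ (1/(d:ℝ) - η) * ((2*(d:ℝ)*A/c) * dist x z) := by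
      intro j
      rw [Real.norm_eq_abs]
      have hsub : A * ((j:ℝ)+1) ^ (-η) * y j * (gfun d j x / c)
          - A * ((j:ℝ)+1) ^ (-η) * y j * (gfun d j z / c)
          = (A * ((j:ℝ)+1) ^ (-η) * y j) * ((gfun d j x - gfun d j z) / c) := by ring
      rw [hsub, abs_mul]
      have h2 : |(gfun d j x - gfun d j z) / c|
          ≤ ((2*(d:ℝ)*((j:ℝ)+1) ^ (1/(d:ℝ))) * dist x z) / c := by
        rw [abs_div, abs_of_pos hc]
        gcongr
        exact gfun_lip d j hd x z
      calc |A * ((j:ℝ)+1) ^ (-η) * y j| * |(gfun d j x - gfun d j z) / c|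
          ≤ (A * ((j:ℝ)+1) ^ (-η)) * (((2*(d:ℝ)*((j:ℝ)+1) ^ (1/(d:ℝ))) * dist x z) / c) :=
            mul_le_mul (hcoef j) h2 (abs_nonneg _) (by positivity)
        _ = (((j:ℝ)+1) ^ (-η) * ((j:ℝ)+1) ^ (1/(d:ℝ))) * ((2*(d:ℝ)*A/c) * dist x z) := by
            ring
        _ = ((j:ℝ)+1) ^ (1/(d:ℝ) - η) * ((2*(d:ℝ)*A/c) * dist x z) := by
            rw [← Real.rpow_add (by positivity : (0:ℝ) < (j:ℝ)+1),
              show -η + 1/(d:ℝ) = 1/(d:ℝ) - η from by ring]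
    rw [Real.dist_eq, ← Summable.tsum_sub (hsum_t x) (hsum_t z)]
    have h2 := tsum_of_norm_bounded
      (hs2.hasSum.mul_right ((2*(d:ℝ)*A/c) * dist x z)) hdiff
    rw [Real.norm_eq_abs] at h2
    refine h2.trans ?_
    rw [Real.coe_toNNReal L hL.le]
    calc (∑' j : ℕ, ((j:ℝ)+1) ^ (1/(d:ℝ) - η)) * ((2*(d:ℝ)*A/c) * dist x z)
        = (A * (2*(d:ℝ)*(∑' j : ℕ, ((j:ℝ)+1) ^ (1/(d:ℝ) - η))) / c) * dist x z := by ring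
      _ ≤ L * dist x z := by
          apply mul_le_mul_of_nonneg_right _ dist_nonneg
          rw [div_le_iff₀ hc]
          exact hAL
  · intro x _
    have h2 := tsum_of_norm_bounded (hs1.hasSum.mul_right (A/c)) (fun j => hterm j x)
    rw [Real.norm_eq_abs] at h2
    refine h2.trans ?_
    calc (∑' j : ℕ, ((j:ℝ)+1) ^ (-η)) * (A/c)
        = (A * (∑' j : ℕ, ((j:ℝ)+1) ^ (-η)))/c := by ring
      _ ≤ β := by
          rw [div_le_iff₀ hc]
          exact hAβ

end SineCubeAux

open SineCubeAux

/-- The bounded Lipschitz class on `[0,2π]^d`, viewed inside `L^r`, contains an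
infinite-dimensional cube `Q_η` for every `η > 1 + 1/d`: there are unit-norm,
linearly independent elements `e_j` with a uniformly bounded biorthogonal dual
family, such that every `u = A Σ_j j^{−η} y_j e_j` with `y_j ∈ [0,1]` is
`L`-Lipschitz and bounded by `β`. -/
theorem stmt6 (d : ℕ) (hd : 1 ≤ d) (η r L β : ℝ)
    (hη : 1 + 1 / (d : ℝ) < η) (hr : 1 ≤ r) (hL : 0 < L) (hβ : 0 < β) :
    ∃ A > (0 : ℝ), ∃ e : ℕ → EuclideanSpace ℝ (Fin d) → ℝ, ∃ M > (0 : ℝ),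
    ∃ estar : ℕ → ((EuclideanSpace ℝ (Fin d) → ℝ) →ₗ[ℝ] ℝ),
      (∀ j, (∫ x in sineCubeE d, |e j x| ^ r) ^ (1 / r) = 1) ∧
      LinearIndependent ℝ e ∧
      (∀ j k, estar k (e j) = if j = k then 1 else 0) ∧
      (∀ (k : ℕ) (u : EuclideanSpace ℝ (Fin d) → ℝ),
        MeasureTheory.MemLp u (ENNReal.ofReal r) (volume.restrict (sineCubeE d)) →
        |estar k u| ≤ M * (∫ x in sineCubeE d, |u x| ^ r) ^ (1 / r)) ∧
      ∀ y : ℕ → ℝ, (∀ j, y j ∈ Set.Icc (0 : ℝ) 1) →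
        LipschitzOnWith (Real.toNNReal L)
          (fun x => ∑' j : ℕ, A * ((j : ℝ) + 1) ^ (-η) * y j * e j x)
          (sineCubeE d) ∧
        ∀ x ∈ sineCubeE d,
          |∑' j : ℕ, A * ((j : ℝ) + 1) ^ (-η) * y j * e j x| ≤ β := by
  classical
  have hd0 : (0:ℝ) < d := by exact_mod_cast hd
  have hπ : (0:ℝ) < π := Real.pi_pos
  have hr0 : (0:ℝ) < r := by linarith
  set I : ℝ := ∫ t in (0:ℝ)..(2*π), Fr r t with hI
  have hIpos : 0 < I := Isin_pos r hr
  set c : ℝ := (I ^ d) ^ (1/r) with hc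
  have hcpos : 0 < c := Real.rpow_pos_of_pos (pow_pos hIpos d) _
  have hcr : c ^ r = I ^ d := by
    rw [hc, ← Real.rpow_mul (le_of_lt (pow_pos hIpos d)),
      one_div_mul_cancel (ne_of_gt hr0), Real.rpow_one]
  set e : ℕ → EuclideanSpace ℝ (Fin d) → ℝ := fun j x => gfun d j x / c with he
  have hcompact := cube_isCompact d
  haveI hfinM : IsFiniteMeasure (volume.restrict (sineCubeE d)) := ⟨by
    rw [Measure.restrict_apply_univ]; exact hcompact.measure_lt_top⟩
  have heV : ∀ j, IntegrableOn (e j) (sineCubeE d) volume := fun j => by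
    apply ContinuousOn.integrableOn_compact hcompact
    exact ((gfun_continuous d j).div_const c).continuousOn
  obtain ⟨Q, hQ⟩ := Submodule.exists_isCompl (Vsub d)
  set P := (Vsub d).linearProjOfIsCompl Q hQ with hP
  set c' : ℝ := c / π ^ d with hc'
  have hc'pos : 0 < c' := div_pos hcpos (pow_pos hπ d)
  set estar : ℕ → ((EuclideanSpace ℝ (Fin d) → ℝ) →ₗ[ℝ] ℝ) :=
    fun k => (phi d k c').comp P with hestar
  have hestar_eval : ∀ (k : ℕ) (u : EuclideanSpace ℝ (Fin d) → ℝ),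
      IntegrableOn u (sineCubeE d) volume →
      estar k u = c' * ∫ x in sineCubeE d, gfun d k x * u x := by
    intro k u hu
    have hPu : P u = ⟨u, hu⟩ := Submodule.linearProjOfIsCompl_apply_left hQ ⟨u, hu⟩
    simp only [hestar, LinearMap.comp_apply, hPu, phi, LinearMap.coe_mk, AddHom.coe_mk]
  -- biorthogonality
  have hbio : ∀ j k, estar k (e j) = if j = k then 1 else 0 := by
    intro j k
    rw [hestar_eval k (e j) (heV j)]
    have h1 : (fun x => gfun d k x * e j x)
        = fun x => (gfun d j x * gfun d k x) / c := by
      funext x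
      simp only [he]
      ring
    rw [h1, MeasureTheory.integral_div, gfun_orth d hd j k]
    by_cases hjk : j = k
    · rw [if_pos hjk, if_pos hjk, hc']
      field_simp
    · rw [if_neg hjk, if_neg hjk]
      simp
  -- unit norms
  have hnorm : ∀ j, (∫ x in sineCubeE d, |e j x| ^ r) ^ (1/r) = 1 := by
    intro j
    have hpt : ∀ x : EuclideanSpace ℝ (Fin d), |e j x| ^ r = |gfun d j x| ^ r / c ^ r := by
      intro x
      simp only [he]
      rw [abs_div, abs_of_pos hcpos, Real.div_rpow (abs_nonneg _) hcpos.le]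
    simp only [hpt]
    rw [MeasureTheory.integral_div, gfun_norm_integral d r hr j, ← hI, hcr,
      div_self (by positivity), Real.one_rpow]
  -- linear independence
  have hLI : LinearIndependent ℝ e := by
    rw [linearIndependent_iff']
    intro s g hsum i hi
    have h0 := congrArg (estar i) hsum
    rw [map_sum, map_zero] at h0
    simp only [_root_.map_smul, smul_eq_mul, hbio, mul_ite, mul_one, mul_zero] at h0
    rw [Finset.sum_ite_eq' s i g, if_pos hi] at h0
    exact h0
  -- uniform bound on the dual family
  set M0 : ℝ := c' * ((volume.restrict (sineCubeE d)) Set.univ).toReal ^ (1 - 1/r) with hM0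
  have hM0nonneg : 0 ≤ M0 := by positivity
  set M : ℝ := M0 + 1 with hM
  have hMpos : 0 < M := by positivity
  have hbound : ∀ (k : ℕ) (u : EuclideanSpace ℝ (Fin d) → ℝ),
      MemLp u (ENNReal.ofReal r) (volume.restrict (sineCubeE d)) →
      |estar k u| ≤ M * (∫ x in sineCubeE d, |u x| ^ r) ^ (1/r) := by
    intro k u hu
    have h1p : (1:ENNReal) ≤ ENNReal.ofReal r := by
      rw [← ENNReal.ofReal_one]
      exact ENNReal.ofReal_le_ofReal hr
    have hu1 : IntegrableOn u (sineCubeE d) volume := hu.integrable h1p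
    rw [hestar_eval k u hu1]
    have hgu := int_gu d k hu1
    have hstep1 : |∫ x in sineCubeE d, gfun d k x * u x| ≤ ∫ x in sineCubeE d, |u x| := by
      rw [← Real.norm_eq_abs]
      refine (MeasureTheory.norm_integral_le_integral_norm _).trans ?_
      apply MeasureTheory.integral_mono hgu.norm hu1.abs
      intro x
      simp only [Real.norm_eq_abs, abs_mul]
      exact mul_le_of_le_one_left (abs_nonneg _) (gfun_abs_le d k x)
    have hholder := holder_bound (volume.restrict (sineCubeE d)) r hr u hu
    have hRHS0 : 0 ≤ (∫ x in sineCubeE d, |u x| ^ r) ^ (1/r) :=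
      Real.rpow_nonneg (MeasureTheory.integral_nonneg fun x =>
        Real.rpow_nonneg (abs_nonneg _) r) _
    calc |c' * ∫ x in sineCubeE d, gfun d k x * u x|
        = c' * |∫ x in sineCubeE d, gfun d k x * u x| := by
          rw [abs_mul, abs_of_pos hc'pos]
      _ ≤ c' * ∫ x in sineCubeE d, |u x| := mul_le_mul_of_nonneg_left hstep1 hc'pos.le
      _ ≤ c' * ((∫ x in sineCubeE d, |u x| ^ r) ^ (1/r)
            * ((volume.restrict (sineCubeE d)) Set.univ).toReal ^ (1 - 1/r)) :=
          mul_le_mul_of_nonneg_left hholder hc'pos.le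
      _ = M0 * (∫ x in sineCubeE d, |u x| ^ r) ^ (1/r) := by rw [hM0]; ring
      _ ≤ M * (∫ x in sineCubeE d, |u x| ^ r) ^ (1/r) := by
          apply mul_le_mul_of_nonneg_right _ hRHS0
          rw [hM]; linarith
  -- summability
  have hs1 : Summable (fun j : ℕ => ((j:ℝ)+1) ^ (-η)) := by
    apply summable_shift
    have h1d : 0 < 1/(d:ℝ) := by positivity
    linarith
  have hs2 : Summable (fun j : ℕ => ((j:ℝ)+1) ^ (1/(d:ℝ) - η)) := by
    apply summable_shift
    linarith
  have hS1pos : 0 < ∑' j : ℕ, ((j:ℝ)+1) ^ (-η) :=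
    Summable.tsum_pos hs1 (fun j => Real.rpow_nonneg (by positivity) _) 0
      (Real.rpow_pos_of_pos (by norm_num) _)
  have hS2pos : 0 < ∑' j : ℕ, ((j:ℝ)+1) ^ (1/(d:ℝ) - η) :=
    Summable.tsum_pos hs2 (fun j => Real.rpow_nonneg (by positivity) _) 0
      (Real.rpow_pos_of_pos (by norm_num) _)
  set A : ℝ := min (L * c / (2 * d * ∑' j : ℕ, ((j:ℝ)+1) ^ (1/(d:ℝ) - η)))
    (β * c / ∑' j : ℕ, ((j:ℝ)+1) ^ (-η)) with hA
  have hApos : 0 < A := lt_min (by positivity) (by positivity)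
  have hAL : A * (2*(d:ℝ)*(∑' j : ℕ, ((j:ℝ)+1) ^ (1/(d:ℝ) - η))) ≤ L * c := by
    have h1 : A ≤ L * c / (2 * d * ∑' j : ℕ, ((j:ℝ)+1) ^ (1/(d:ℝ) - η)) := min_le_left _ _
    have h2 : (0:ℝ) < 2 * d * ∑' j : ℕ, ((j:ℝ)+1) ^ (1/(d:ℝ) - η) := by positivity
    exact (le_div_iff₀ h2).1 h1
  have hAβ : A * (∑' j : ℕ, ((j:ℝ)+1) ^ (-η)) ≤ β * c := by
    have h1 : A ≤ β * c / ∑' j : ℕ, ((j:ℝ)+1) ^ (-η) := min_le_right _ _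
    exact (le_div_iff₀ hS1pos).1 h1
  refine ⟨A, hApos, e, M, hMpos, estar, hnorm, hLI, hbio, hbound, ?_⟩
  intro y hy
  have hfp := final_part d hd η c A L β (by linarith)
    (by
      have h1d : 0 < 1/(d:ℝ) := by positivity
      linarith)
    hcpos hApos hL hβ hAL hAβ y (fun j => (hy j).1) (fun j => (hy j).2)
  simp only [he]
  exact hfp
end

section
/- Let f : W × U → ℝ satisfy |f(α₁,u₁) − f(α₂,u₂)| ≤ L·max{‖α₁−α₂‖_∞, ‖u₁−u₂‖_∞} for all inputs, where W, U consist of L_W- and L_U-Lipschitz functions on compact cubes Ω_W, Ω_U. Let {aᵢ}₁^{n_W}, {c_m}₁^{n_U} be centers of δ_W- and δ_U-covers of Ω_W, Ω_U with subordinate partitions of unity {ρᵢ}, {ω_m}, and define the lifted surrogate f̂(z,w) = f(Σᵢ zᵢρᵢ, Σ_m w_m ω_m). Then: (a) |f(α,u) − f̂(P_W(α), P_U(u))| ≤ L·max{L_W δ_W, L_U δ_U} for all (α,u), where P_W(α) = (α(a₁),…,α(a_{n_W})) and P_U(u) = (u(c₁),…,u(c_{n_U})); and (b) f̂ is L-Lipschitz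 on ℝ^{n_W} × ℝ^{n_U} with respect to the ℓ² norm of the concatenated vector. -/
/-!
Both parts reduce, through the Lipschitz bound on `f`, to pointwise bounds for convex
combinations: at every point the partition of unity gives weights `ρᵢ x ≥ 0` with sum `1`,
and a convex combination stays within `ε` of `g` as soon as every term it actually charges
does. For (a) the charged terms are the samples `α (aᵢ)` with `dist x aᵢ ≤ δ`, hence within
`K δ` of `α x`; for (b) every coefficient difference is bounded by the `ℓ²` norm.
-/

open Finset

theorem abs_sub_sum_mul_le_of_sum_eq_one {ι : Type*} (s : Finset ι) {w y : ι → ℝ} {g ε : ℝ}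
    (hw : ∀ i ∈ s, 0 ≤ w i) (hsum : ∑ i ∈ s, w i = 1)
    (hy : ∀ i ∈ s, w i ≠ 0 → |g - y i| ≤ ε) :
    |g - ∑ i ∈ s, y i * w i| ≤ ε := by
  have hdiff : g - ∑ i ∈ s, y i * w i = ∑ i ∈ s, (g - y i) * w i := by
    simp only [sub_mul, sum_sub_distrib, ← mul_sum, hsum, mul_one]
  calc |g - ∑ i ∈ s, y i * w i|
      ≤ ∑ i ∈ s, |g - y i| * w i := by
        rw [hdiff]
        refine (abs_sum_le_sum_abs _ _).trans_eq (sum_congr rfl fun i hi => ?_)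
        rw [abs_mul, abs_of_nonneg (hw i hi)]
    _ ≤ ∑ i ∈ s, ε * w i := by
        refine sum_le_sum fun i hi => ?_
        obtain hwi | hwi := eq_or_ne (w i) 0
        · simp [hwi]
        · exact mul_le_mul_of_nonneg_right (hy i hi hwi) (hw i hi)
    _ = ε := by rw [← mul_sum, hsum, mul_one]

section PartitionOfUnity

variable {X ι : Type*} [Fintype ι] {Ω : Set X} {ρ : ι → X → ℝ}
  (hρ0 : ∀ i, ∀ x ∈ Ω, 0 ≤ ρ i x) (hρsum : ∀ x ∈ Ω, ∑ i, ρ i x = 1)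
include hρ0 hρsum

theorem abs_sub_sum_mul_le_of_lipschitzOnWith [PseudoMetricSpace X] {a : ι → X} {δ : ℝ}
    (hρsupp : ∀ i, ∀ x ∈ Ω, δ < dist x (a i) → ρ i x = 0) (ha : ∀ i, a i ∈ Ω)
    {K : NNReal} {α : X → ℝ} (hα : LipschitzOnWith K α Ω) {x : X} (hx : x ∈ Ω) :
    |α x - ∑ i, α (a i) * ρ i x| ≤ K * δ := by
  refine abs_sub_sum_mul_le_of_sum_eq_one _ (fun i _ => hρ0 i x hx) (hρsum x hx)
    fun i _ hρi => ?_
  have hnear : dist x (a i) ≤ δ := not_lt.mp fun h => hρi (hρsupp i x hx h)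
  calc |α x - α (a i)| = dist (α x) (α (a i)) := (Real.dist_eq _ _).symm
    _ ≤ K * dist x (a i) := hα.dist_le_mul x hx (a i) (ha i)
    _ ≤ K * δ := mul_le_mul_of_nonneg_left hnear K.coe_nonneg

theorem abs_sum_mul_sub_sum_mul_le_sqrt (z₁ z₂ : ι → ℝ) {x : X} (hx : x ∈ Ω) :
    |∑ i, z₁ i * ρ i x - ∑ i, z₂ i * ρ i x| ≤ √(∑ i, (z₁ i - z₂ i) ^ 2) := by
  have hdiff : ∑ i, z₁ i * ρ i x - ∑ i, z₂ i * ρ i x = -(0 - ∑ i, (z₁ i - z₂ i) * ρ i x) := by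
    simp only [sub_mul, sum_sub_distrib, zero_sub, neg_neg]
  rw [hdiff, abs_neg]
  refine abs_sub_sum_mul_le_of_sum_eq_one _ (fun i _ => hρ0 i x hx) (hρsum x hx)
    fun i _ _ => ?_
  rw [zero_sub, abs_neg]
  exact Real.abs_le_sqrt (single_le_sum (fun j _ => sq_nonneg (z₁ j - z₂ j)) (mem_univ i))

end PartitionOfUnity

theorem stmt18_general {dW dU : ℕ}
    (ΩW : Set (EuclideanSpace ℝ (Fin dW))) (ΩU : Set (EuclideanSpace ℝ (Fin dU)))
    (L LW LU δW δU : ℝ) (hLW : 0 ≤ LW) (hLU : 0 ≤ LU)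
    (hδW : 0 ≤ δW)
    (f : (EuclideanSpace ℝ (Fin dW) → ℝ) → (EuclideanSpace ℝ (Fin dU) → ℝ) → ℝ)
    (hf : ∀ α₁ u₁ α₂ u₂, ∀ t : ℝ, 0 ≤ t →
      (∀ x ∈ ΩW, |α₁ x - α₂ x| ≤ t) → (∀ x ∈ ΩU, |u₁ x - u₂ x| ≤ t) →
      |f α₁ u₁ - f α₂ u₂| ≤ L * t)
    (nW nU : ℕ)
    (a : Fin nW → EuclideanSpace ℝ (Fin dW)) (ha : ∀ i, a i ∈ ΩW)
    (c : Fin nU → EuclideanSpace ℝ (Fin dU)) (hc : ∀ m, c m ∈ ΩU)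
    (ρ : Fin nW → EuclideanSpace ℝ (Fin dW) → ℝ)
    (ω : Fin nU → EuclideanSpace ℝ (Fin dU) → ℝ)
    (hρ01 : ∀ i, ∀ x ∈ ΩW, ρ i x ∈ Set.Icc (0 : ℝ) 1)
    (hρsum : ∀ x ∈ ΩW, ∑ i, ρ i x = 1)
    (hρsupp : ∀ i, ∀ x ∈ ΩW, δW < dist x (a i) → ρ i x = 0)
    (hω01 : ∀ m, ∀ x ∈ ΩU, ω m x ∈ Set.Icc (0 : ℝ) 1)
    (hωsum : ∀ x ∈ ΩU, ∑ m, ω m x = 1)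
    (hωsupp : ∀ m, ∀ x ∈ ΩU, δU < dist x (c m) → ω m x = 0) :
    (∀ (α : EuclideanSpace ℝ (Fin dW) → ℝ) (u : EuclideanSpace ℝ (Fin dU) → ℝ),
      LipschitzOnWith (Real.toNNReal LW) α ΩW →
      LipschitzOnWith (Real.toNNReal LU) u ΩU →
      |f α u - f (fun x => ∑ i, α (a i) * ρ i x)
          (fun x => ∑ m, u (c m) * ω m x)|
        ≤ L * max (LW * δW) (LU * δU)) ∧
    ∀ (z₁ z₂ : Fin nW → ℝ) (w₁ w₂ : Fin nU → ℝ),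
      |f (fun x => ∑ i, z₁ i * ρ i x) (fun x => ∑ m, w₁ m * ω m x)
        - f (fun x => ∑ i, z₂ i * ρ i x) (fun x => ∑ m, w₂ m * ω m x)|
      ≤ L * Real.sqrt ((∑ i, (z₁ i - z₂ i) ^ 2) + ∑ m, (w₁ m - w₂ m) ^ 2) := by
  have hρ0 : ∀ i, ∀ x ∈ ΩW, 0 ≤ ρ i x := fun i x hx => (hρ01 i x hx).1
  have hω0 : ∀ m, ∀ x ∈ ΩU, 0 ≤ ω m x := fun m x hx => (hω01 m x hx).1
  constructor
  · intro α u hα hu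
    refine hf _ _ _ _ _ (le_max_of_le_left (mul_nonneg hLW hδW)) (fun x hx => ?_) fun x hx => ?_
    · have h := abs_sub_sum_mul_le_of_lipschitzOnWith hρ0 hρsum hρsupp ha hα hx
      rw [Real.coe_toNNReal LW hLW] at h
      exact h.trans (le_max_left _ _)
    · have h := abs_sub_sum_mul_le_of_lipschitzOnWith hω0 hωsum hωsupp hc hu hx
      rw [Real.coe_toNNReal LU hLU] at h
      exact h.trans (le_max_right _ _)
  · intro z₁ z₂ w₁ w₂
    have hA : 0 ≤ ∑ i, (z₁ i - z₂ i) ^ 2 := sum_nonneg fun i _ => sq_nonneg _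
    have hB : 0 ≤ ∑ m, (w₁ m - w₂ m) ^ 2 := sum_nonneg fun m _ => sq_nonneg _
    refine hf _ _ _ _ _ (Real.sqrt_nonneg _) (fun x hx => ?_) fun x hx => ?_
    · exact (abs_sum_mul_sub_sum_mul_le_sqrt hρ0 hρsum z₁ z₂ hx).trans
        (Real.sqrt_le_sqrt (le_add_of_nonneg_right hB))
    · exact (abs_sum_mul_sub_sum_mul_le_sqrt hω0 hωsum w₁ w₂ hx).trans
        (Real.sqrt_le_sqrt (le_add_of_nonneg_left hA))

/-- Finite-dimensional surrogate of a functional on a product of Lipschitz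
classes: (a) the surrogate built from point samples on δ-covers reproduces `f`
up to `L·max{L_W δ_W, L_U δ_U}`, and (b) it is `L`-Lipschitz with respect to
the `ℓ²` norm of the concatenated sample vectors. -/
theorem stmt18 {dW dU : ℕ}
    (ΩW : Set (EuclideanSpace ℝ (Fin dW))) (ΩU : Set (EuclideanSpace ℝ (Fin dU)))
    (L LW LU δW δU : ℝ) (hL : 0 ≤ L) (hLW : 0 ≤ LW) (hLU : 0 ≤ LU)
    (hδW : 0 ≤ δW) (hδU : 0 ≤ δU)
    (f : (EuclideanSpace ℝ (Fin dW) → ℝ) → (EuclideanSpace ℝ (Fin dU) → ℝ) → ℝ)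
    (hf : ∀ α₁ u₁ α₂ u₂, ∀ t : ℝ, 0 ≤ t →
      (∀ x ∈ ΩW, |α₁ x - α₂ x| ≤ t) → (∀ x ∈ ΩU, |u₁ x - u₂ x| ≤ t) →
      |f α₁ u₁ - f α₂ u₂| ≤ L * t)
    (nW nU : ℕ)
    (a : Fin nW → EuclideanSpace ℝ (Fin dW)) (ha : ∀ i, a i ∈ ΩW)
    (c : Fin nU → EuclideanSpace ℝ (Fin dU)) (hc : ∀ m, c m ∈ ΩU)
    (ρ : Fin nW → EuclideanSpace ℝ (Fin dW) → ℝ)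
    (ω : Fin nU → EuclideanSpace ℝ (Fin dU) → ℝ)
    (hρ01 : ∀ i, ∀ x ∈ ΩW, ρ i x ∈ Set.Icc (0 : ℝ) 1)
    (hρsum : ∀ x ∈ ΩW, ∑ i, ρ i x = 1)
    (hρsupp : ∀ i, ∀ x ∈ ΩW, δW < dist x (a i) → ρ i x = 0)
    (hω01 : ∀ m, ∀ x ∈ ΩU, ω m x ∈ Set.Icc (0 : ℝ) 1)
    (hωsum : ∀ x ∈ ΩU, ∑ m, ω m x = 1)
    (hωsupp : ∀ m, ∀ x ∈ ΩU, δU < dist x (c m) → ω m x = 0) :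
    (∀ (α : EuclideanSpace ℝ (Fin dW) → ℝ) (u : EuclideanSpace ℝ (Fin dU) → ℝ),
      LipschitzOnWith (Real.toNNReal LW) α ΩW →
      LipschitzOnWith (Real.toNNReal LU) u ΩU →
      |f α u - f (fun x => ∑ i, α (a i) * ρ i x)
          (fun x => ∑ m, u (c m) * ω m x)|
        ≤ L * max (LW * δW) (LU * δU)) ∧
    ∀ (z₁ z₂ : Fin nW → ℝ) (w₁ w₂ : Fin nU → ℝ),
      |f (fun x => ∑ i, z₁ i * ρ i x) (fun x => ∑ m, w₁ m * ω m x)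
        - f (fun x => ∑ i, z₂ i * ρ i x) (fun x => ∑ m, w₂ m * ω m x)|
      ≤ L * Real.sqrt ((∑ i, (z₁ i - z₂ i) ^ 2) + ∑ m, (w₁ m - w₂ m) ^ 2) :=
  stmt18_general ΩW ΩU L LW LU δW δU hLW hLU hδW f hf nW nU a ha c hc ρ ω hρ01 hρsum hρsupp hω01
    hωsum hωsupp
end
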